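/- arXiv:solv-int/9809009 — 2 statements merged into one kernel-verified Lean document; each statement's English description precedes it below -/
import Mathlib

section
/- (Structure of Lax operators, nonisospectral part) Suppose (EW₀)U - UW₀ = U'[ρ₀] + λ·U_λ and for each j ≥ 1, (EΘⱼ)U - UΘⱼ = U'[ρ_j] - λ·U'[ρ_{j-1}]. Define W_l = λ^l W₀ + Σ_{j=1}^{l} λ^{l-j} Θⱼ. Then for all l ≥ 0, (EW_l)U - UW_l = U'[ρ_l] + λ^{l+1}·U_λ. -/
/-! Write `D X = (E X) U - U X`. It is additive, and `D (λ X) = λ (D X)` since `λ` is fixed by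
`E` and commutes with `U`. The operators satisfy `W_{m+1} = λ W_m + Θ_{m+1}`, so
`D W_{m+1} = λ (D W_m) + U'[ρ_{m+1}] - λ U'[ρ_m]`, and the `U'[ρ]` terms telescope. -/

section Telescoping

variable {R : Type*} [Ring R]

theorem eq_add_pow_succ_mul_of_succ_eq (l c : R) (a r : ℕ → R)
    (h_zero : a 0 = r 0 + l * c) (h_succ : ∀ n, a (n + 1) = l * a n + (r (n + 1) - l * r n)) :
    ∀ m, a m = r m + l ^ (m + 1) * c
  | 0 => by rw [h_zero, zero_add, pow_one]
  | n + 1 => by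
    rw [h_succ, eq_add_pow_succ_mul_of_succ_eq l c a r h_zero h_succ n, pow_succ' l (n + 1),
      mul_assoc, mul_add]
    abel

theorem pow_mul_add_sum_Icc_succ (l w : R) (Θ : ℕ → R) (n : ℕ) :
    l ^ (n + 1) * w + ∑ j ∈ Finset.Icc 1 (n + 1), l ^ (n + 1 - j) * Θ j
      = l * (l ^ n * w + ∑ j ∈ Finset.Icc 1 n, l ^ (n - j) * Θ j) + Θ (n + 1) := by
  have h_sum : ∑ j ∈ Finset.Icc 1 n, l ^ (n + 1 - j) * Θ j
      = l * ∑ j ∈ Finset.Icc 1 n, l ^ (n - j) * Θ j := by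
    rw [Finset.mul_sum]
    refine Finset.sum_congr rfl fun j hj => ?_
    rw [Nat.sub_add_comm (Finset.mem_Icc.mp hj).2, pow_succ', mul_assoc]
  rw [Finset.sum_Icc_succ_top (Nat.le_add_left 1 n), h_sum, Nat.sub_self, pow_zero, one_mul,
    pow_succ', mul_assoc, mul_add, add_assoc]

end Telescoping

section TwistedCommutator

variable {A : Type*} [Ring A] (E : A →+* A) (U : A)

def twistedCommutator (X : A) : A := E X * U - U * X

theorem twistedCommutator_add (X Y : A) :
    twistedCommutator E U (X + Y) = twistedCommutator E U X + twistedCommutator E U Y := by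
  simp only [twistedCommutator, map_add, add_mul, mul_add]
  abel

theorem twistedCommutator_mul_left {l : A} (hEl : E l = l) (hlU : Commute l U) (X : A) :
    twistedCommutator E U (l * X) = l * twistedCommutator E U X := by
  rw [twistedCommutator, twistedCommutator, map_mul, hEl, mul_sub, mul_assoc, ← mul_assoc U,
    ← hlU.eq, mul_assoc]

end TwistedCommutator

/-- Structure of Lax operators, nonisospectral part (Theorem 3, second half).
In an associative algebra with an endomorphism `E` and a central element `l`
(playing the role of λ) fixed by `E`, suppose
  (EW₀)U - UW₀ = Uρ 0 + l·Ulam    (where `Uρ j` stands for U'[ρ_j])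
and for each j ≥ 1,
  (EΘⱼ)U - UΘⱼ = Uρ j - l·Uρ (j-1).
Then W_l = l^l W₀ + Σ_{j=1}^{l} l^{l-j} Θⱼ satisfies
(EW_l)U - UW_l = Uρ l + l^{l+1}·Ulam. -/
theorem lax_operator_structure_nonisospectral
    {A : Type*} [Ring A]
    (E : A →+* A) (l : A)
    (hl_central : ∀ x : A, l * x = x * l)
    (hEl : E l = l)
    (U Ulam W₀ : A) (Θ : ℕ → A) (Uρ : ℕ → A)
    (hW₀ : (E W₀) * U - U * W₀ = Uρ 0 + l * Ulam)
    (hΘ : ∀ j : ℕ, (E (Θ (j + 1))) * U - U * (Θ (j + 1)) = Uρ (j + 1) - l * Uρ j) :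
    ∀ m : ℕ,
      (E (l ^ m * W₀ + ∑ j ∈ Finset.Icc 1 m, l ^ (m - j) * Θ j)) * U
        - U * (l ^ m * W₀ + ∑ j ∈ Finset.Icc 1 m, l ^ (m - j) * Θ j)
      = Uρ m + l ^ (m + 1) * Ulam := by
  let W : ℕ → A := fun m => l ^ m * W₀ + ∑ j ∈ Finset.Icc 1 m, l ^ (m - j) * Θ j
  refine eq_add_pow_succ_mul_of_succ_eq l Ulam (fun m => twistedCommutator E U (W m)) Uρ
    (by simpa [W, twistedCommutator] using hW₀) fun n => ?_
  have hW_succ : W (n + 1) = l * W n + Θ (n + 1) := pow_mul_add_sum_Icc_succ l W₀ Θ n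
  rw [hW_succ, twistedCommutator_add,
    twistedCommutator_mul_left E U hEl (hl_central U)]
  exact congrArg _ (hΘ n)
end

section
/- For the Volterra lattice equation u_t(n) = u(n)(u(n-1) - u(n+1)) with 2×2 spectral matrix U(n,λ) = [[1, u(n)],[λ^{-1}, 0]] and Lax matrix V₀(n,λ) = [[λ/2 - u(n), λu(n)],[1, -λ/2 - u(n-1)]], the discrete zero curvature equation holds: E(V₀)·U - U·V₀ = U'[K₀], where K₀(n) = u(n)(u(n-1) - u(n+1)), (E V₀)(n) = V₀(n+1), and U'[K₀] is the matrix [[0, K₀(n)],[0,0]]. -/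
/-! `spectralMatrix`, `laxMatrix` and `flow` are the paper's `U`, `V₀` and `K₀`. -/

namespace Volterra

variable {K : Type*} [Field K]

def spectralMatrix (u : ℤ → K) (lam : K) (n : ℤ) : Matrix (Fin 2) (Fin 2) K :=
  !![1, u n; lam⁻¹, 0]

def laxMatrix (u : ℤ → K) (lam : K) (n : ℤ) : Matrix (Fin 2) (Fin 2) K :=
  !![lam / 2 - u n, lam * u n; 1, -(lam / 2) - u (n - 1)]

def flow (u : ℤ → K) (n : ℤ) : K :=
  u n * (u (n - 1) - u (n + 1))

theorem laxMatrix_succ_mul_sub_mul_laxMatrix [NeZero (2 : K)] (u : ℤ → K) {lam : K}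
    (hlam : lam ≠ 0) (n : ℤ) :
    laxMatrix u lam (n + 1) * spectralMatrix u lam n - spectralMatrix u lam n * laxMatrix u lam n =
      !![0, flow u n; 0, 0] := by
  rw [laxMatrix, laxMatrix, spectralMatrix, flow, add_sub_cancel_right,
    Matrix.mul_fin_two, Matrix.mul_fin_two]
  ext i j
  fin_cases i <;> fin_cases j <;> simp <;> field_simp <;> ring

end Volterra

/-- Discrete zero curvature representation of the Volterra lattice:
for U(n) = [[1, u(n)],[λ⁻¹, 0]], V₀(n) = [[λ/2 - u(n), λu(n)],[1, -λ/2 - u(n-1)]]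
and K₀(n) = u(n)(u(n-1) - u(n+1)), one has
E(V₀)·U - U·V₀ = U'[K₀], i.e. V₀(n+1)U(n) - U(n)V₀(n) = [[0, K₀(n)],[0,0]]. -/
theorem volterra_zero_curvature
    (u : ℤ → ℝ) (lam : ℝ) (hlam : lam ≠ 0) (n : ℤ) :
    letI U : ℤ → Matrix (Fin 2) (Fin 2) ℝ := fun m => !![1, u m; lam⁻¹, 0]
    letI V₀ : ℤ → Matrix (Fin 2) (Fin 2) ℝ := fun m =>
      !![lam / 2 - u m, lam * u m; 1, -(lam / 2) - u (m - 1)]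
    letI K₀ : ℤ → ℝ := fun m => u m * (u (m - 1) - u (m + 1))
    V₀ (n + 1) * U n - U n * V₀ n = !![0, K₀ n; 0, 0] :=
  Volterra.laxMatrix_succ_mul_sub_mul_laxMatrix u hlam n
end
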